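/- arXiv:1101.1183 — 3 statements merged into one kernel-verified Lean document; each statement's English description precedes it below -/
import Mathlib

section
/- Let a > 0 and N ≥ 1, and let H^{(N)}(a) be the tridiagonal matrix with diagonal a+2j−1, superdiagonal −j, subdiagonal −(a+j). Define the diagonal matrix Θ₀ with entries θ_{nn} = (n−1)! / ((a+1)(a+2)⋯(a+n−1)) for n = 1,…,N (so θ_{11} = 1). Then Θ₀ is positive definite and satisfies the Dieudonné equation Hᵀ·Θ₀ = Θ₀·H. -/
open Matrix

/-- The `N×N` tridiagonal Laguerre lattice Hamiltonian `H^{(N)}(a)` (real entries):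
diagonal `a + 2j − 1`, superdiagonal `−j`, subdiagonal `−(a+j)` (1-based `j`). -/
noncomputable def HmatR (a : ℝ) (N : ℕ) : Matrix (Fin N) (Fin N) ℝ :=
  Matrix.of fun i j =>
    if (i : ℕ) = (j : ℕ) then a + 2 * (i : ℕ) + 1
    else if (j : ℕ) = (i : ℕ) + 1 then -((i : ℕ) + 1)
    else if (i : ℕ) = (j : ℕ) + 1 then -(a + (j : ℕ) + 1)
    else 0

/-- The diagonal metric `Θ₀(a)`: entries `θ_{nn} = (n−1)! / ∏_{m=1}^{n−1}(a+m)`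
(1-based `n`; here the 0-based index `i` corresponds to `n = i+1`). -/
noncomputable def theta0 (a : ℝ) (N : ℕ) : Matrix (Fin N) (Fin N) ℝ :=
  Matrix.diagonal fun i : Fin N =>
    (Nat.factorial (i : ℕ) : ℝ) / ∏ m ∈ Finset.range (i : ℕ), (a + (m : ℝ) + 1)

lemma laguerre_key (a : ℝ) (ha : 0 < a) (n : ℕ) :
    (a + n + 1) * ((Nat.factorial (n + 1) : ℝ) / ∏ m ∈ Finset.range (n + 1), (a + (m : ℝ) + 1))
      = ((n : ℝ) + 1) * ((Nat.factorial n : ℝ) / ∏ m ∈ Finset.range n, (a + (m : ℝ) + 1)) := by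
  have h1 : a + (n : ℝ) + 1 ≠ 0 := by positivity
  have h2 : (∏ m ∈ Finset.range n, (a + (m : ℝ) + 1)) ≠ 0 :=
    ne_of_gt (Finset.prod_pos fun m _ => by positivity)
  rw [Finset.prod_range_succ, Nat.factorial_succ]
  push_cast
  field_simp

/-- For `a > 0`, the diagonal matrix `Θ₀(a)` is positive definite and satisfies the
Dieudonné equation `Hᵀ Θ₀ = Θ₀ H` for the Laguerre Hamiltonian `H^{(N)}(a)`. -/
theorem theta0_posDef_and_dieudonne (a : ℝ) (ha : 0 < a) (N : ℕ) (hN : 1 ≤ N) :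
    (theta0 a N).PosDef ∧ (HmatR a N)ᵀ * theta0 a N = theta0 a N * HmatR a N := by
  have hθpos : ∀ n : ℕ, 0 < (Nat.factorial n : ℝ) / ∏ m ∈ Finset.range n, (a + (m : ℝ) + 1) := by
    intro n
    exact div_pos (by exact_mod_cast Nat.factorial_pos n)
      (Finset.prod_pos fun m _ => by positivity)
  constructor
  · rw [theta0]
    exact Matrix.PosDef.diagonal fun i => hθpos i
  · ext i j
    rw [theta0, Matrix.mul_diagonal, Matrix.diagonal_mul, Matrix.transpose_apply]
    simp only [HmatR, Matrix.of_apply]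
    rcases eq_or_ne (i : ℕ) (j : ℕ) with h | h
    · have hij : i = j := Fin.ext h
      subst hij; ring
    · rw [if_neg (Ne.symm h), if_neg h]
      rcases eq_or_ne (j : ℕ) ((i : ℕ) + 1) with h1 | h1
      · rw [if_neg (by omega), if_pos h1, if_pos h1, h1]
        linear_combination (-1 : ℝ) * laguerre_key a ha (i : ℕ)
      · rw [if_neg h1, if_neg h1]
        rcases eq_or_ne (i : ℕ) ((j : ℕ) + 1) with h2 | h2
        · rw [if_pos h2, if_pos h2, h2]
          linear_combination laguerre_key a ha (j : ℕ)
        · rw [if_neg h2, if_neg h2]; ring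
end

section
/- Let a > 0, N ≥ 2, and let H^{(N)}(a) be the tridiagonal matrix with diagonal a+2j−1, superdiagonal −j, subdiagonal −(a+j). Define the real symmetric tridiagonal matrix P₁ with zero (1,1) entry, diagonal entries θ_{nn} = −2(n−1)·(n−1)!/((a+1)(a+2)⋯(a+n−1)) for n = 2,…,N (so θ_{22} = −2/(a+1), θ_{33} = −8/((a+1)(a+2)), θ_{44} = −36/((a+1)(a+2)(a+3))), and off-diagonal entries θ_{n,n+1} = n!/((a+1)(a+2)⋯(a+n−1)) for n = 1,…,N−1 (so θ_{12} = 1). Then P₁ satisfies the Dieudonné equation (H^{(N)}(a))ᵀ·P₁ = P₁·H^{(N)}(a). -/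
open Matrix

/-- `Dfun a i = ∏_{m=1}^{i}(a+m)`, i.e. the denominator `D_n = (a+1)⋯(a+n−1)` for
the 1-based index `n = i+1`. -/
noncomputable def Dfun (a : ℝ) (i : ℕ) : ℝ := ∏ m ∈ Finset.range i, (a + (m : ℝ) + 1)

/-- The symmetric tridiagonal pseudometric `P₁(a)`: `(P₁)_{11} = 0`, diagonal entries
`(P₁)_{nn} = −2(n−1)·(n−1)!/D_n` (so `θ_{22} = −2/(a+1)`, `θ_{33} = −8/((a+1)(a+2))`,
`θ_{44} = −36/((a+1)(a+2)(a+3))`), and off-diagonal entries `(P₁)_{n,n+1} = n!/D_n`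
(so `θ_{12} = 1`). Here the 0-based index `i` corresponds to `n = i+1`. -/
noncomputable def P1mat (a : ℝ) (N : ℕ) : Matrix (Fin N) (Fin N) ℝ :=
  Matrix.of fun i j =>
    if (i : ℕ) = (j : ℕ) then -2 * (i : ℕ) * (Nat.factorial (i : ℕ)) / Dfun a (i : ℕ)
    else if (j : ℕ) = (i : ℕ) + 1 then (Nat.factorial ((i : ℕ) + 1) : ℝ) / Dfun a (i : ℕ)
    else if (i : ℕ) = (j : ℕ) + 1 then (Nat.factorial ((j : ℕ) + 1) : ℝ) / Dfun a (j : ℕ)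
    else 0

/-- ℕ-indexed entry function of `HmatR`. -/
noncomputable def hEnt (a : ℝ) (i j : ℕ) : ℝ :=
  if i = j then a + 2 * i + 1
  else if j = i + 1 then -((i : ℝ) + 1)
  else if i = j + 1 then -(a + j + 1)
  else 0

/-- ℕ-indexed entry function of `P1mat`. -/
noncomputable def pEnt (a : ℝ) (i j : ℕ) : ℝ :=
  if i = j then -2 * i * (Nat.factorial i) / Dfun a i
  else if j = i + 1 then (Nat.factorial (i + 1) : ℝ) / Dfun a i
  else if i = j + 1 then (Nat.factorial (j + 1) : ℝ) / Dfun a j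
  else 0

lemma hEnt_self (a : ℝ) (n : ℕ) : hEnt a n n = a + 2 * n + 1 := by
  unfold hEnt; rw [if_pos rfl]

lemma hEnt_up (a : ℝ) (n : ℕ) : hEnt a n (n+1) = -((n : ℝ) + 1) := by
  unfold hEnt; rw [if_neg (by omega), if_pos rfl]

lemma hEnt_down (a : ℝ) (n : ℕ) : hEnt a (n+1) n = -(a + n + 1) := by
  unfold hEnt; rw [if_neg (by omega), if_neg (by omega), if_pos rfl]

lemma pEnt_self (a : ℝ) (n : ℕ) :
    pEnt a n n = -2 * n * (Nat.factorial n) / Dfun a n := by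
  unfold pEnt; rw [if_pos rfl]

lemma pEnt_up (a : ℝ) (n : ℕ) :
    pEnt a n (n+1) = (Nat.factorial (n+1) : ℝ) / Dfun a n := by
  unfold pEnt; rw [if_neg (by omega), if_pos rfl]

lemma pEnt_down (a : ℝ) (n : ℕ) :
    pEnt a (n+1) n = (Nat.factorial (n+1) : ℝ) / Dfun a n := by
  unfold pEnt; rw [if_neg (by omega), if_neg (by omega), if_pos rfl]

set_option maxHeartbeats 1600000 in
/-- The commutator identity for the ℕ-indexed entry functions. -/
lemma dieudonne_key (a : ℝ) (ha : 0 < a) (N I J : ℕ) (hN : 2 ≤ N)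
    (hI : I < N) (hJ : J < N) :
    ∑ k ∈ Finset.range N, (hEnt a k I * pEnt a k J - pEnt a I k * hEnt a k J) = 0 := by
  have hDne : ∀ n : ℕ, Dfun a n ≠ 0 := by
    intro n
    have : 0 < Dfun a n := by
      apply Finset.prod_pos; intro m _; positivity
    exact ne_of_gt this
  have hD1 : ∀ n : ℕ, Dfun a (n+1) = Dfun a n * (a + n + 1) := by
    intro n
    exact Finset.prod_range_succ (fun m => (a + (m:ℝ) + 1)) n
  have hf1 : ∀ n : ℕ, ((Nat.factorial (n+1) : ℕ) : ℝ) = ((n:ℝ)+1) * (Nat.factorial n : ℝ) := by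
    intro n; rw [Nat.factorial_succ]; push_cast; ring
  have hzero : ∀ k : ℕ, ¬(k+1 = I ∨ k = I ∨ k = I+1) →
      hEnt a k I * pEnt a k J - pEnt a I k * hEnt a k J = 0 := by
    intro k hk
    push_neg at hk
    obtain ⟨h1, h2, h3⟩ := hk
    have e1 : hEnt a k I = 0 := by
      unfold hEnt
      rw [if_neg (by omega), if_neg (by omega), if_neg (by omega)]
    have e2 : pEnt a I k = 0 := by
      unfold pEnt
      rw [if_neg (by omega), if_neg (by omega), if_neg (by omega)]
    rw [e1, e2]; ring
  rcases Nat.eq_zero_or_pos I with hI0 | hIpos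
  · subst hI0
    rw [← Finset.sum_subset (show ({0, 0+1} : Finset ℕ) ⊆ Finset.range N by
          intro x hx; simp only [Finset.mem_insert, Finset.mem_singleton] at hx
          simp only [Finset.mem_range]; omega)
        (by intro x _ hx'; apply hzero
            simp only [Finset.mem_insert, Finset.mem_singleton] at hx'; omega)]
    rw [Finset.sum_insert (by simp only [Finset.mem_insert, Finset.mem_singleton]; omega),
      Finset.sum_singleton]
    rw [hEnt_self, hEnt_down, pEnt_self, pEnt_up]
    unfold hEnt pEnt
    split_ifs <;>
      first
        | (exfalso; omega)
        | contradiction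
        | (subst_vars; field_simp [hDne];
           try simp only [hD1, hf1, Nat.factorial_zero, Nat.factorial_one];
           try push_cast; try ring)
  · obtain ⟨i0, rfl⟩ : ∃ i0, I = i0 + 1 := ⟨I - 1, by omega⟩
    by_cases hTop : i0 + 1 + 1 < N
    · rw [← Finset.sum_subset (show ({i0, i0+1, i0+1+1} : Finset ℕ) ⊆ Finset.range N by
            intro x hx; simp only [Finset.mem_insert, Finset.mem_singleton] at hx
            simp only [Finset.mem_range]; omega)
          (by intro x _ hx'; apply hzero
              simp only [Finset.mem_insert, Finset.mem_singleton] at hx'; omega)]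
      rw [Finset.sum_insert (by simp only [Finset.mem_insert, Finset.mem_singleton]; omega),
        Finset.sum_insert (by simp only [Finset.mem_insert, Finset.mem_singleton]; omega),
        Finset.sum_singleton]
      rw [hEnt_up, hEnt_self, hEnt_down, pEnt_down, pEnt_self, pEnt_up]
      unfold hEnt pEnt
      split_ifs <;>
        first
          | (exfalso; omega)
          | contradiction
          | (subst_vars; field_simp [hDne];
             try simp only [hD1, hf1, Nat.factorial_zero, Nat.factorial_one];
             try push_cast; try ring)
    · rw [← Finset.sum_subset (show ({i0, i0+1} : Finset ℕ) ⊆ Finset.range N by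
            intro x hx; simp only [Finset.mem_insert, Finset.mem_singleton] at hx
            simp only [Finset.mem_range]; omega)
          (by intro x hx hx'; apply hzero
              simp only [Finset.mem_insert, Finset.mem_singleton] at hx'
              simp only [Finset.mem_range] at hx; omega)]
      rw [Finset.sum_insert (by simp only [Finset.mem_insert, Finset.mem_singleton]; omega),
        Finset.sum_singleton]
      rw [hEnt_up, hEnt_self, pEnt_down, pEnt_self]
      unfold hEnt pEnt
      split_ifs <;>
        first
          | (exfalso; omega)
          | contradiction
          | (subst_vars; field_simp [hDne];
             try simp only [hD1, hf1, Nat.factorial_zero, Nat.factorial_one];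
             try push_cast; try ring)

/-- The tridiagonal pseudometric `P₁(a)` satisfies the Dieudonné equation
`(H^{(N)}(a))ᵀ P₁ = P₁ H^{(N)}(a)`. -/
theorem P1_dieudonne (a : ℝ) (ha : 0 < a) (N : ℕ) (hN : 2 ≤ N) :
    (HmatR a N)ᵀ * P1mat a N = P1mat a N * HmatR a N := by
  ext i j
  rw [Matrix.mul_apply, Matrix.mul_apply]
  have hk := dieudonne_key a ha N i j hN i.isLt j.isLt
  rw [Finset.sum_sub_distrib, sub_eq_zero] at hk
  calc ∑ k, (HmatR a N)ᵀ i k * P1mat a N k j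
      = ∑ k ∈ Finset.range N, hEnt a k i * pEnt a k j :=
        Fin.sum_univ_eq_sum_range (fun m => hEnt a m (i : ℕ) * pEnt a m (j : ℕ)) N
    _ = ∑ k ∈ Finset.range N, pEnt a (i : ℕ) k * hEnt a k (j : ℕ) := hk
    _ = ∑ k, P1mat a N i k * HmatR a N k j :=
        (Fin.sum_univ_eq_sum_range (fun m => pEnt a (i : ℕ) m * hEnt a m (j : ℕ)) N).symm
end

section
/- Let a > 0 and N ≥ 2, and let H^{(N)}(a) be the tridiagonal matrix with diagonal a+2j−1, superdiagonal −j, subdiagonal −(a+j). The real vector space of real symmetric N×N matrices P satisfying (H^{(N)}(a))ᵀP = P·H^{(N)}(a) has dimension exactly N. -/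
open Matrix

/-- The real vector space of real symmetric solutions `P` of the Dieudonné
equation `(H^{(N)}(a))ᵀ P = P H^{(N)}(a)`. -/
noncomputable def solSpace (a : ℝ) (N : ℕ) : Submodule ℝ (Matrix (Fin N) (Fin N) ℝ) where
  carrier := {P | P.IsSymm ∧ (HmatR a N)ᵀ * P = P * HmatR a N}
  add_mem' := by
    rintro x y ⟨hx1, hx2⟩ ⟨hy1, hy2⟩
    exact ⟨by simp [Matrix.IsSymm, Matrix.transpose_add, hx1.eq, hy1.eq],
      by simp [Matrix.mul_add, Matrix.add_mul, hx2, hy2]⟩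
  zero_mem' := ⟨by simp [Matrix.IsSymm], by simp⟩
  smul_mem' := by
    rintro c x ⟨hx1, hx2⟩
    exact ⟨by simp [Matrix.IsSymm, Matrix.transpose_smul, hx1.eq],
      by simp [Matrix.mul_smul, Matrix.smul_mul, hx2]⟩

namespace SolProof

noncomputable def w (a : ℝ) : ℕ → ℝ
  | 0 => 1
  | n+1 => w a n * (n+1) / (a+n+1)

lemma w_succ (a : ℝ) (n : ℕ) : w a (n+1) = w a n * (n+1) / (a+n+1) := rfl

lemma w_pos {a : ℝ} (ha : 0 < a) : ∀ n, 0 < w a n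
  | 0 => one_pos
  | n+1 => by
      have h1 := w_pos ha n
      have h2 : (0:ℝ) < a + n + 1 := by positivity
      have h3 : (0:ℝ) < (n:ℝ)+1 := by positivity
      rw [w_succ]
      positivity

lemma w_rec {a : ℝ} (ha : 0 < a) (n : ℕ) :
    (a + n + 1) * w a (n+1) = ((n:ℝ)+1) * w a n := by
  have h2 : (a + (n:ℝ) + 1) ≠ 0 := by positivity
  rw [w_succ]
  field_simp

noncomputable def eta (a : ℝ) (N : ℕ) : Matrix (Fin N) (Fin N) ℝ :=
  Matrix.diagonal fun i => w a (i : ℕ)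

lemma Ht_eta {a : ℝ} (ha : 0 < a) (N : ℕ) :
    (HmatR a N)ᵀ * eta a N = eta a N * HmatR a N := by
  ext i j
  rw [eta, Matrix.mul_diagonal, Matrix.diagonal_mul, Matrix.transpose_apply]
  show HmatR a N j i * w a j = w a i * HmatR a N i j
  simp only [HmatR, Matrix.of_apply]
  by_cases hd : (i:ℕ) = (j:ℕ)
  · have : i = j := Fin.ext hd
    subst this; simp only [if_pos rfl]; ring
  by_cases hs : (j:ℕ) = (i:ℕ)+1
  · rw [if_neg (by omega), if_neg (by omega), if_pos hs, if_neg hd, if_pos hs, hs]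
    have := w_rec ha (i:ℕ)
    linarith
  by_cases hs2 : (i:ℕ) = (j:ℕ)+1
  · rw [if_neg (by omega), if_pos hs2, if_neg hd, if_neg hs, if_pos hs2, hs2]
    have := w_rec ha (j:ℕ)
    linarith
  · rw [if_neg (by omega), if_neg (by omega), if_neg (by omega), if_neg hd, if_neg hs,
      if_neg hs2]
    ring


lemma H_entry_split (a : ℝ) {N : ℕ} (i j : Fin N) :
    HmatR a N i j =
      (if (i:ℕ) = (j:ℕ) then a + 2*(i:ℕ)+1 else 0)
    + (if (j:ℕ) = (i:ℕ)+1 then -(((i:ℕ):ℝ)+1) else 0)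
    + (if (i:ℕ) = (j:ℕ)+1 then -(a+(j:ℕ)+1) else 0) := by
  simp only [HmatR, Matrix.of_apply]
  split_ifs <;> first | (exfalso; omega) | ring

lemma mul_H_apply (a : ℝ) {N : ℕ} (Q : Matrix (Fin N) (Fin N) ℝ) (i j : Fin N) :
    (Q * HmatR a N) i j =
      (if h : 0 < (j:ℕ) then Q i ⟨(j:ℕ)-1, by omega⟩ * (-((j:ℕ):ℝ)) else 0)
    + Q i j * (a + 2*(j:ℕ)+1)
    + (if h : (j:ℕ)+1 < N then Q i ⟨(j:ℕ)+1, h⟩ * (-(a+(j:ℕ)+1)) else 0) := by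
  have e1 : ∑ k : Fin N, Q i k * (if (k:ℕ)=(j:ℕ) then a + 2*(k:ℕ)+1 else 0)
      = Q i j * (a + 2*(j:ℕ)+1) := by
    rw [Finset.sum_eq_single j]
    · simp
    · intro k _ hk
      rw [if_neg (fun h => hk (Fin.ext h)), mul_zero]
    · intro h; exact absurd (Finset.mem_univ j) h
  have e2 : ∑ k : Fin N, Q i k * (if (j:ℕ)=(k:ℕ)+1 then -(((k:ℕ):ℝ)+1) else 0)
      = (if h : 0 < (j:ℕ) then Q i ⟨(j:ℕ)-1, by omega⟩ * (-((j:ℕ):ℝ)) else 0) := by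
    by_cases hj : 0 < (j:ℕ)
    · rw [dif_pos hj, Finset.sum_eq_single (⟨(j:ℕ)-1, by omega⟩ : Fin N)]
      · rw [if_pos (by simp; omega)]
        have hc : ((((j:ℕ)-1 : ℕ)):ℝ) = ((j:ℕ):ℝ) - 1 := by
          have h1 : 1 ≤ (j:ℕ) := hj
          push_cast [Nat.cast_sub h1]
          ring
        simp only [hc]
        ring
      · intro k _ hk
        rw [if_neg, mul_zero]
        intro h
        exact hk (Fin.ext (show (k:ℕ) = (j:ℕ)-1 by omega))
      · intro h; exact absurd (Finset.mem_univ _) h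
    · rw [dif_neg hj]
      apply Finset.sum_eq_zero
      intro k _
      rw [if_neg (by omega), mul_zero]
  have e3 : ∑ k : Fin N, Q i k * (if (k:ℕ)=(j:ℕ)+1 then -(a+(j:ℕ)+1) else 0)
      = (if h : (j:ℕ)+1 < N then Q i ⟨(j:ℕ)+1, h⟩ * (-(a+(j:ℕ)+1)) else 0) := by
    by_cases hj : (j:ℕ)+1 < N
    · rw [dif_pos hj, Finset.sum_eq_single (⟨(j:ℕ)+1, hj⟩ : Fin N)]
      · rw [if_pos rfl]
      · intro k _ hk
        rw [if_neg, mul_zero]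
        intro h
        exact hk (Fin.ext h)
      · intro h; exact absurd (Finset.mem_univ _) h
    · rw [dif_neg hj]
      apply Finset.sum_eq_zero
      intro k _
      rw [if_neg (by have := k.isLt; omega), mul_zero]
  rw [Matrix.mul_apply]
  simp_rw [H_entry_split a, mul_add]
  rw [Finset.sum_add_distrib, Finset.sum_add_distrib, e1, e2, e3]
  ring

lemma H_mul_apply (a : ℝ) {N : ℕ} (Q : Matrix (Fin N) (Fin N) ℝ) (i j : Fin N) :
    (HmatR a N * Q) i j =
      (if h : 0 < (i:ℕ) then (-(a+(i:ℕ))) * Q ⟨(i:ℕ)-1, by omega⟩ j else 0)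
    + (a + 2*(i:ℕ)+1) * Q i j
    + (if h : (i:ℕ)+1 < N then (-(((i:ℕ):ℝ)+1)) * Q ⟨(i:ℕ)+1, h⟩ j else 0) := by
  have e1 : ∑ k : Fin N, (if (i:ℕ)=(k:ℕ) then a + 2*(i:ℕ)+1 else 0) * Q k j
      = (a + 2*(i:ℕ)+1) * Q i j := by
    rw [Finset.sum_eq_single i]
    · simp
    · intro k _ hk
      rw [if_neg (fun h => hk (Fin.ext h.symm)), zero_mul]
    · intro h; exact absurd (Finset.mem_univ _) h
  have e2 : ∑ k : Fin N, (if (k:ℕ)=(i:ℕ)+1 then -(((i:ℕ):ℝ)+1) else 0) * Q k j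
      = (if h : (i:ℕ)+1 < N then (-(((i:ℕ):ℝ)+1)) * Q ⟨(i:ℕ)+1, h⟩ j else 0) := by
    by_cases hi : (i:ℕ)+1 < N
    · rw [dif_pos hi, Finset.sum_eq_single (⟨(i:ℕ)+1, hi⟩ : Fin N)]
      · rw [if_pos rfl]
      · intro k _ hk
        rw [if_neg, zero_mul]
        intro h
        exact hk (Fin.ext h)
      · intro h; exact absurd (Finset.mem_univ _) h
    · rw [dif_neg hi]
      apply Finset.sum_eq_zero
      intro k _
      rw [if_neg (by have := k.isLt; omega), zero_mul]
  have e3 : ∑ k : Fin N, (if (i:ℕ)=(k:ℕ)+1 then -(a+(k:ℕ)+1) else 0) * Q k j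
      = (if h : 0 < (i:ℕ) then (-(a+(i:ℕ))) * Q ⟨(i:ℕ)-1, by omega⟩ j else 0) := by
    by_cases hi : 0 < (i:ℕ)
    · rw [dif_pos hi, Finset.sum_eq_single (⟨(i:ℕ)-1, by omega⟩ : Fin N)]
      · rw [if_pos (by simp; omega)]
        have hc : ((((i:ℕ)-1 : ℕ)):ℝ) = ((i:ℕ):ℝ) - 1 := by
          have h1 : 1 ≤ (i:ℕ) := hi
          push_cast [Nat.cast_sub h1]
          ring
        simp only [hc]
        ring
      · intro k _ hk
        rw [if_neg, zero_mul]
        intro h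
        exact hk (Fin.ext (show (k:ℕ) = (i:ℕ)-1 by omega))
      · intro h; exact absurd (Finset.mem_univ _) h
    · rw [dif_neg hi]
      apply Finset.sum_eq_zero
      intro k _
      rw [if_neg (by omega), zero_mul]
  rw [Matrix.mul_apply]
  simp_rw [H_entry_split a, add_mul]
  rw [Finset.sum_add_distrib, Finset.sum_add_distrib, e1, e2, e3]
  ring


lemma Hpow_col_zero (a : ℝ) {N : ℕ} (hN : 0 < N) :
    ∀ (k : ℕ) (i : Fin N), k < (i:ℕ) → (HmatR a N ^ k) i ⟨0, hN⟩ = 0 := by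
  intro k
  induction k with
  | zero =>
    intro i hi
    rw [pow_zero]
    exact Matrix.one_apply_ne (by intro h; rw [h] at hi; simp at hi)
  | succ k IH =>
    intro i hi
    rw [pow_succ', H_mul_apply]
    rw [dif_pos (show 0 < (i:ℕ) by omega)]
    rw [IH ⟨(i:ℕ)-1, by omega⟩ (show k < (i:ℕ)-1 by omega)]
    rw [IH i (by omega)]
    by_cases h3 : (i:ℕ)+1 < N
    · rw [dif_pos h3, IH ⟨(i:ℕ)+1, h3⟩ (show k < (i:ℕ)+1 by omega)]; ring
    · rw [dif_neg h3]; ring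

lemma Hpow_col_diag {a : ℝ} (ha : 0 < a) {N : ℕ} (hN : 0 < N) :
    ∀ (k : ℕ) (hk : k < N), (HmatR a N ^ k) ⟨k, hk⟩ ⟨0, hN⟩ ≠ 0 := by
  intro k
  induction k with
  | zero => intro hk; rw [pow_zero, Matrix.one_apply_eq]; norm_num
  | succ k IH =>
    intro hk1
    have hkN : k < N := by omega
    rw [pow_succ', H_mul_apply]
    rw [dif_pos (show 0 < ((⟨k+1, hk1⟩ : Fin N):ℕ) from Nat.succ_pos k)]
    rw [Hpow_col_zero a hN k ⟨k+1, hk1⟩ (Nat.lt_succ_self k)]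
    have last0 : (if h : ((⟨k+1, hk1⟩ : Fin N):ℕ)+1 < N then
        (-((((⟨k+1, hk1⟩ : Fin N):ℕ):ℝ)+1)) * (HmatR a N ^ k) ⟨((⟨k+1, hk1⟩ : Fin N):ℕ)+1, h⟩ ⟨0, hN⟩ else 0) = 0 := by
      by_cases h3 : ((⟨k+1, hk1⟩ : Fin N):ℕ)+1 < N
      · rw [dif_pos h3, Hpow_col_zero a hN k ⟨k+2, h3⟩ (show k < k+2 by omega)]; ring
      · rw [dif_neg h3]
    rw [last0]
    simp only [mul_zero, add_zero]
    apply mul_ne_zero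
    · have hpos : (0:ℝ) < a + (((⟨k+1, hk1⟩ : Fin N):ℕ):ℝ) := by positivity
      exact neg_ne_zero.mpr (ne_of_gt hpos)
    · exact IH hkN

/-- triangular matrix of first columns of `η H^k` -/
noncomputable def Mcol (a : ℝ) (N : ℕ) (hN : 0 < N) : Matrix (Fin N) (Fin N) ℝ :=
  Matrix.of fun i k => w a (i:ℕ) * (HmatR a N ^ (k:ℕ)) i ⟨0, hN⟩

lemma Mcol_det_ne {a : ℝ} (ha : 0 < a) {N : ℕ} (hN : 0 < N) :
    (Mcol a N hN).det ≠ 0 := by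
  rw [Matrix.det_of_upperTriangular (M := Mcol a N hN)
    (by
      intro i j hij
      simp only [Mcol, Matrix.of_apply]
      rw [Hpow_col_zero a hN (j:ℕ) i hij]
      ring)]
  apply Finset.prod_ne_zero_iff.mpr
  intro i _
  exact mul_ne_zero (ne_of_gt (w_pos ha _)) (Hpow_col_diag ha hN (i:ℕ) i.isLt)


lemma mem_solSpace {a : ℝ} {N : ℕ} {P : Matrix (Fin N) (Fin N) ℝ} :
    P ∈ solSpace a N ↔ P.IsSymm ∧ (HmatR a N)ᵀ * P = P * HmatR a N := Iff.rfl

lemma etaHpow_mem {a : ℝ} (ha : 0 < a) {N : ℕ} (k : ℕ) :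
    eta a N * HmatR a N ^ k ∈ solSpace a N := by
  have key : ∀ m : ℕ, ((HmatR a N)ᵀ)^m * eta a N = eta a N * (HmatR a N)^m := by
    intro m
    induction m with
    | zero => simp
    | succ m IHm =>
      rw [pow_succ', mul_assoc, IHm, ← mul_assoc, Ht_eta ha, mul_assoc, ← pow_succ']
  constructor
  · show (eta a N * HmatR a N ^ k)ᵀ = _
    rw [Matrix.transpose_mul, Matrix.transpose_pow,
      show (eta a N)ᵀ = eta a N from Matrix.diagonal_transpose _]
    exact key k
  · rw [← mul_assoc, Ht_eta ha, mul_assoc, mul_assoc]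
    congr 1
    exact (pow_succ' (HmatR a N) k).symm.trans (pow_succ (HmatR a N) k)


end SolProof

open SolProof in
/-- For `a > 0` and `N ≥ 2`, the space of real symmetric `N×N` solutions of the
Dieudonné equation for the Laguerre Hamiltonian has dimension exactly `N`. -/
theorem solSpace_finrank (a : ℝ) (ha : 0 < a) (N : ℕ) (hN : 2 ≤ N) :
    Module.finrank ℝ (solSpace a N) = N := by
  have hN0 : 0 < N := by omega
  let φ : solSpace a N →ₗ[ℝ] (Fin N → ℝ) :=
    { toFun := fun P => fun i => (P : Matrix (Fin N) (Fin N) ℝ) i ⟨0, hN0⟩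
      map_add' := fun x y => rfl
      map_smul' := fun c x => rfl }
  have hinj : Function.Injective φ := by
    rw [injective_iff_map_eq_zero]
    intro P hP
    have h0 : ∀ i, (P : Matrix (Fin N) (Fin N) ℝ) i ⟨0, hN0⟩ = 0 := fun i => congrFun hP i
    have heq := (mem_solSpace.mp P.2).2
    have col : ∀ j, ∀ hj : j < N, ∀ i : Fin N, (P : Matrix (Fin N) (Fin N) ℝ) i ⟨j, hj⟩ = 0 := by
      intro j
      induction j using Nat.strong_induction_on with
      | _ j IH =>
        match j with
        | 0 => intro hj i; exact h0 i
        | (j+1) =>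
          intro hj i
          have hj' : j < N := by omega
          have hcol : ∀ i : Fin N, (P : Matrix (Fin N) (Fin N) ℝ) i ⟨j, hj'⟩ = 0 :=
            fun i => IH j (by omega) hj' i
          have L : ((HmatR a N)ᵀ * (P : Matrix (Fin N) (Fin N) ℝ)) i ⟨j, hj'⟩ = 0 := by
            rw [Matrix.mul_apply]
            apply Finset.sum_eq_zero
            intro k _
            rw [hcol k, mul_zero]
          rw [heq, mul_H_apply] at L
          have hc : (0:ℝ) < a + (j:ℝ) + 1 := by positivity
          split_ifs at L with h1
          · simp only [Fin.val_mk] at L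
            rw [IH (j-1) (by omega) (by omega) i, hcol i] at L
            have hX : (P : Matrix (Fin N) (Fin N) ℝ) i ⟨j+1, hj⟩ * (a + (j:ℝ) + 1) = 0 := by
              linarith
            rcases mul_eq_zero.mp hX with h | h
            · exact h
            · linarith
          · simp only [Fin.val_mk] at L
            rw [hcol i] at L
            have hX : (P : Matrix (Fin N) (Fin N) ℝ) i ⟨j+1, hj⟩ * (a + (j:ℝ) + 1) = 0 := by
              linarith
            rcases mul_eq_zero.mp hX with h | h
            · exact h
            · linarith
    apply Subtype.ext
    ext i j
    have := col (j:ℕ) j.isLt i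
    simpa using this
  have hsurj : Function.Surjective φ := by
    intro v
    have hdet : IsUnit (Mcol a N hN0).det := isUnit_iff_ne_zero.mpr (Mcol_det_ne ha hN0)
    set c := (Mcol a N hN0)⁻¹ *ᵥ v with hc
    refine ⟨⟨∑ k : Fin N, c k • (eta a N * HmatR a N ^ (k:ℕ)),
      Submodule.sum_smul_mem _ _ (fun k _ => etaHpow_mem ha (k:ℕ))⟩, ?_⟩
    have hMv : (Mcol a N hN0) *ᵥ c = v := by
      rw [hc, Matrix.mulVec_mulVec, Matrix.mul_nonsing_inv _ hdet, Matrix.one_mulVec]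
    funext i
    show (∑ k : Fin N, c k • (eta a N * HmatR a N ^ (k:ℕ))) i ⟨0, hN0⟩ = v i
    rw [← hMv]
    rw [Matrix.sum_apply]
    rw [Matrix.mulVec, dotProduct]
    apply Finset.sum_congr rfl
    intro k _
    rw [Matrix.smul_apply, smul_eq_mul]
    rw [show (eta a N * HmatR a N ^ (k:ℕ)) i ⟨0, hN0⟩
      = w a (i:ℕ) * (HmatR a N ^ (k:ℕ)) i ⟨0, hN0⟩ from by
        rw [eta, Matrix.diagonal_mul]]
    rw [show Mcol a N hN0 i k = w a (i:ℕ) * (HmatR a N ^ (k:ℕ)) i ⟨0, hN0⟩ from rfl]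
    ring
  exact ((LinearEquiv.ofBijective φ ⟨hinj, hsurj⟩).finrank_eq).trans (Module.finrank_fin_fun ℝ)
end
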